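/- arXiv:0910.0935 — 2 statements merged into one kernel-verified Lean document; each statement's English description precedes it below -/
import Mathlib

section
/- The FF^PD_g two-vector cosine formula: for all y₁, y₂ ∈ ℝ^N with y₁ ≠ 0 and y₂ ≠ 0, ⟨ζ(y₁), ζ(y₂)⟩ = K(y₁)^h·K(y₂)^h·( A(y₁)·A(y₂) + h²·⟨v(y₁), v(y₂)⟩ ) / ( √B(y₁)·√B(y₂) ). In particular the Finsleroid angle α(y₁,y₂) = (1/h)·arccos( ⟨ζ(y₁),ζ(y₂)⟩ / (‖ζ(y₁)‖·‖ζ(y₂)‖) ) equals (1/h)·arccos( (A(y₁)A(y₂) + h²⟨v(y₁),v(y₂)⟩) / (√B(y₁)·√B(y₂)) ). -/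
noncomputable section

open Real
open scoped RealInnerProductSpace

/-- The parameter `h = sqrt(1 - g^2/4)`. -/
def hpar (g : ℝ) : ℝ := Real.sqrt (1 - g ^ 2 / 4)

variable {N : ℕ}

/-- `v(y) = y - ⟨b,y⟩ b`, the part of `y` orthogonal to the unit axis vector `b`. -/
def vv (b y : EuclideanSpace ℝ (Fin N)) : EuclideanSpace ℝ (Fin N) := y - (inner ℝ b y : ℝ) • b

/-- `q(y) = ‖v(y)‖`. -/
def qq (b y : EuclideanSpace ℝ (Fin N)) : ℝ := ‖vv b y‖

/-- `A(y) = ⟨b,y⟩ + (g/2) q(y)`. -/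
def AA (g : ℝ) (b y : EuclideanSpace ℝ (Fin N)) : ℝ := (inner ℝ b y : ℝ) + g / 2 * qq b y

/-- `B(y) = ⟨b,y⟩² + g ⟨b,y⟩ q(y) + q(y)²`. -/
def BB (g : ℝ) (b y : EuclideanSpace ℝ (Fin N)) : ℝ :=
  (inner ℝ b y : ℝ) ^ 2 + g * (inner ℝ b y : ℝ) * qq b y + qq b y ^ 2

/-- The azimuthal angle `χ(y) = (1/h) arccos (A(y)/√B(y))`. -/
def chi (g : ℝ) (b y : EuclideanSpace ℝ (Fin N)) : ℝ :=
  1 / hpar g * Real.arccos (AA g b y / Real.sqrt (BB g b y))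

/-- `J(y) = exp(-(g/2) χ(y))`. -/
def JJ (g : ℝ) (b y : EuclideanSpace ℝ (Fin N)) : ℝ := Real.exp (-(g / 2) * chi g b y)

/-- The Finsleroid metric function `K(y) = √B(y) · J(y)`. -/
def KK (g : ℝ) (b y : EuclideanSpace ℝ (Fin N)) : ℝ := Real.sqrt (BB g b y) * JJ g b y

/-- The Ka-transformation `ζ(y) = (K(y)^h/√B(y)) (h v(y) + A(y) b)`. -/
def zeta (g : ℝ) (b y : EuclideanSpace ℝ (Fin N)) : EuclideanSpace ℝ (Fin N) :=
  (KK g b y ^ hpar g / Real.sqrt (BB g b y)) • (hpar g • vv b y + AA g b y • b)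

/-! Since `b ⟂ v(y)`, the vector `h v(y) + A(y) b` has squared length `A² + h² q² = B`, so `ζ(y)` has
length `K(y)^h`, and the inner product of two such vectors is `A₁ A₂ + h² ⟨v₁, v₂⟩`. The positive
scalar factors of `ζ` then cancel in the cosine. -/

lemma inner_smul_add_smul_of_inner_eq_zero {E : Type*} [NormedAddCommGroup E]
    [InnerProductSpace ℝ E] {b u₁ u₂ : E} (hb : ‖b‖ = 1) (h₁ : ⟪b, u₁⟫ = 0) (h₂ : ⟪b, u₂⟫ = 0)
    (s a₁ a₂ : ℝ) :
    ⟪s • u₁ + a₁ • b, s • u₂ + a₂ • b⟫ = a₁ * a₂ + s ^ 2 * ⟪u₁, u₂⟫ := by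
  have h₁' : ⟪u₁, b⟫ = 0 := by rw [real_inner_comm, h₁]
  have hbb : ⟪b, b⟫ = 1 := by rw [real_inner_self_eq_norm_sq, hb, one_pow]
  simp only [inner_add_left, inner_add_right, real_inner_smul_left, real_inner_smul_right,
    h₁', h₂, hbb]
  ring

lemma hpar_sq {g : ℝ} (hg : g ^ 2 ≤ 4) : hpar g ^ 2 = 1 - g ^ 2 / 4 := by
  rw [hpar, sq_sqrt]
  linarith

lemma vv_add_inner_smul (b y : EuclideanSpace ℝ (Fin N)) : vv b y + ⟪b, y⟫ • b = y :=
  sub_add_cancel _ _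

lemma inner_vv_right (b y : EuclideanSpace ℝ (Fin N)) (hb : ‖b‖ = 1) : ⟪b, vv b y⟫ = 0 := by
  rw [vv, inner_sub_right, real_inner_smul_right, real_inner_self_eq_norm_sq, hb]
  ring

lemma BB_eq_AA_sq_add {g : ℝ} (hg : g ^ 2 ≤ 4) (b y : EuclideanSpace ℝ (Fin N)) :
    BB g b y = AA g b y ^ 2 + hpar g ^ 2 * qq b y ^ 2 := by
  rw [BB, AA, hpar_sq hg]
  ring

lemma BB_pos {g : ℝ} (hg : g ^ 2 < 4) (b : EuclideanSpace ℝ (Fin N)) {y : EuclideanSpace ℝ (Fin N)}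
    (hy : y ≠ 0) : 0 < BB g b y := by
  rcases (norm_nonneg (vv b y)).eq_or_lt with hq | hq
  · have hv : vv b y = 0 := norm_eq_zero.1 hq.symm
    have hby : ⟪b, y⟫ ≠ 0 := by
      rintro hby
      apply hy
      rw [← vv_add_inner_smul b y, hv, hby, zero_smul, add_zero]
    rw [BB, qq, ← hq]
    simpa using sq_pos_of_ne_zero hby
  · have hq' : 0 < qq b y := hq
    have h4 : 0 < 4 - g ^ 2 := by linarith
    have hBsq : 4 * BB g b y = (2 * ⟪b, y⟫ + g * qq b y) ^ 2 + (4 - g ^ 2) * qq b y ^ 2 := by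
      rw [BB]
      ring
    nlinarith [sq_nonneg (2 * ⟪b, y⟫ + g * qq b y), mul_pos h4 (pow_pos hq' 2)]

lemma KK_pos {g : ℝ} {b y : EuclideanSpace ℝ (Fin N)} (hB : 0 < BB g b y) : 0 < KK g b y :=
  mul_pos (sqrt_pos.2 hB) (exp_pos _)

lemma inner_zeta {g : ℝ} {b : EuclideanSpace ℝ (Fin N)} (hb : ‖b‖ = 1)
    (y₁ y₂ : EuclideanSpace ℝ (Fin N)) :
    ⟪zeta g b y₁, zeta g b y₂⟫ =
      KK g b y₁ ^ hpar g / √(BB g b y₁) * (KK g b y₂ ^ hpar g / √(BB g b y₂)) *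
        (AA g b y₁ * AA g b y₂ + hpar g ^ 2 * ⟪vv b y₁, vv b y₂⟫) := by
  rw [zeta, zeta, real_inner_smul_left, real_inner_smul_right,
    inner_smul_add_smul_of_inner_eq_zero hb (inner_vv_right b y₁ hb) (inner_vv_right b y₂ hb)]
  ring

lemma norm_hpar_smul_vv_add_AA_smul {g : ℝ} (hg : g ^ 2 ≤ 4) {b : EuclideanSpace ℝ (Fin N)}
    (hb : ‖b‖ = 1) (y : EuclideanSpace ℝ (Fin N)) :
    ‖hpar g • vv b y + AA g b y • b‖ = √(BB g b y) := by
  rw [← sqrt_sq (norm_nonneg _), ← real_inner_self_eq_norm_sq,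
    inner_smul_add_smul_of_inner_eq_zero hb (inner_vv_right b y hb) (inner_vv_right b y hb),
    real_inner_self_eq_norm_sq, BB_eq_AA_sq_add hg, qq]
  ring_nf

lemma norm_zeta {g : ℝ} (hg : g ^ 2 < 4) {b : EuclideanSpace ℝ (Fin N)} (hb : ‖b‖ = 1)
    {y : EuclideanSpace ℝ (Fin N)} (hy : y ≠ 0) : ‖zeta g b y‖ = KK g b y ^ hpar g := by
  have hB := BB_pos hg b hy
  have hc : 0 < KK g b y ^ hpar g / √(BB g b y) :=
    div_pos (rpow_pos_of_pos (KK_pos hB) _) (sqrt_pos.2 hB)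
  rw [zeta, norm_smul, norm_hpar_smul_vv_add_AA_smul hg.le hb, norm_of_nonneg hc.le,
    div_mul_cancel₀ _ (sqrt_pos.2 hB).ne']

theorem stmt7_general (N : ℕ) (g : ℝ) (hg1 : -2 < g) (hg2 : g < 2)
    (b : EuclideanSpace ℝ (Fin N)) (hb : ‖b‖ = 1)
    (y₁ y₂ : EuclideanSpace ℝ (Fin N)) (hy₁ : y₁ ≠ 0) (hy₂ : y₂ ≠ 0) :
    (inner ℝ (zeta g b y₁) (zeta g b y₂) : ℝ) =
      KK g b y₁ ^ hpar g * KK g b y₂ ^ hpar g *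
        (AA g b y₁ * AA g b y₂ + hpar g ^ 2 * (inner ℝ (vv b y₁) (vv b y₂) : ℝ)) /
          (Real.sqrt (BB g b y₁) * Real.sqrt (BB g b y₂)) ∧
    1 / hpar g *
        Real.arccos ((inner ℝ (zeta g b y₁) (zeta g b y₂) : ℝ) / (‖zeta g b y₁‖ * ‖zeta g b y₂‖)) =
      1 / hpar g *
        Real.arccos ((AA g b y₁ * AA g b y₂ + hpar g ^ 2 * (inner ℝ (vv b y₁) (vv b y₂) : ℝ)) /
          (Real.sqrt (BB g b y₁) * Real.sqrt (BB g b y₂))) := by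
  have hg : g ^ 2 < 4 := by nlinarith
  have hinner := inner_zeta (g := g) hb y₁ y₂
  rw [div_mul_div_comm, div_mul_eq_mul_div] at hinner
  refine ⟨hinner, ?_⟩
  have hK₁ := rpow_pos_of_pos (KK_pos (BB_pos hg b hy₁)) (hpar g)
  have hK₂ := rpow_pos_of_pos (KK_pos (BB_pos hg b hy₂)) (hpar g)
  rw [hinner, norm_zeta hg hb hy₁, norm_zeta hg hb hy₂, mul_div_assoc,
    mul_div_cancel_left₀ _ (mul_pos hK₁ hK₂).ne']

theorem stmt7 (N : ℕ) (hN : 2 ≤ N) (g : ℝ) (hg1 : -2 < g) (hg2 : g < 2)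
    (b : EuclideanSpace ℝ (Fin N)) (hb : ‖b‖ = 1)
    (y₁ y₂ : EuclideanSpace ℝ (Fin N)) (hy₁ : y₁ ≠ 0) (hy₂ : y₂ ≠ 0) :
    (inner ℝ (zeta g b y₁) (zeta g b y₂) : ℝ) =
      KK g b y₁ ^ hpar g * KK g b y₂ ^ hpar g *
        (AA g b y₁ * AA g b y₂ + hpar g ^ 2 * (inner ℝ (vv b y₁) (vv b y₂) : ℝ)) /
          (Real.sqrt (BB g b y₁) * Real.sqrt (BB g b y₂)) ∧
    1 / hpar g *
        Real.arccos ((inner ℝ (zeta g b y₁) (zeta g b y₂) : ℝ) / (‖zeta g b y₁‖ * ‖zeta g b y₂‖)) =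
      1 / hpar g *
        Real.arccos ((AA g b y₁ * AA g b y₂ + hpar g ^ 2 * (inner ℝ (vv b y₁) (vv b y₂) : ℝ)) /
          (Real.sqrt (BB g b y₁) * Real.sqrt (BB g b y₂))) :=
  stmt7_general N g hg1 hg2 b hb y₁ y₂ hy₁ hy₂
end
end

section
/- The Finsleroid angle between the opposed unit axis vectors equals π/h: with b⁻ = −exp(gπ/2)·b, one has (1/h)·arccos( ⟨ζ(b⁻), ζ(b)⟩ / (‖ζ(b⁻)‖·‖ζ(b)‖) ) = π/h; in particular this angle is strictly greater than π whenever g ≠ 0. -/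
noncomputable section

open Real
open scoped RealInnerProductSpace

variable {N : ℕ}

open InnerProductGeometry

section AxisVectors

variable {N : ℕ} {b : EuclideanSpace ℝ (Fin N)}

lemma vv_smul_self (hb : ‖b‖ = 1) (t : ℝ) : vv b (t • b) = 0 := by
  simp [vv, real_inner_smul_right, hb]

lemma qq_smul_self (hb : ‖b‖ = 1) (t : ℝ) : qq b (t • b) = 0 := by
  rw [qq, vv_smul_self hb, norm_zero]

lemma AA_smul_self (hb : ‖b‖ = 1) (g t : ℝ) : AA g b (t • b) = t := by
  simp [AA, qq_smul_self hb, real_inner_smul_right, hb]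

lemma sqrt_BB_smul_self (hb : ‖b‖ = 1) (g t : ℝ) : Real.sqrt (BB g b (t • b)) = |t| := by
  simp [BB, qq_smul_self hb, real_inner_smul_right, hb, Real.sqrt_sq_eq_abs]

lemma KK_smul_self_pos (hb : ‖b‖ = 1) (g : ℝ) {t : ℝ} (ht : t ≠ 0) : 0 < KK g b (t • b) := by
  rw [KK, sqrt_BB_smul_self hb]
  exact mul_pos (abs_pos.mpr ht) (Real.exp_pos _)

lemma zeta_smul_self (hb : ‖b‖ = 1) (g t : ℝ) :
    zeta g b (t • b) = (KK g b (t • b) ^ hpar g / |t|) • (t • b) := by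
  rw [zeta, vv_smul_self hb, AA_smul_self hb, sqrt_BB_smul_self hb, smul_zero, zero_add]

/-- On the axis, `ζ` rescales by a positive factor, so it preserves angles there. -/
lemma angle_zeta_smul_self (hb : ‖b‖ = 1) (g : ℝ) {s t : ℝ} (hs : s ≠ 0) (ht : t ≠ 0) :
    angle (zeta g b (s • b)) (zeta g b (t • b)) = angle (s • b) (t • b) := by
  have scale_pos : ∀ {r : ℝ}, r ≠ 0 → 0 < KK g b (r • b) ^ hpar g / |r| := fun hr =>
    div_pos (Real.rpow_pos_of_pos (KK_smul_self_pos hb g hr) _) (abs_pos.mpr hr)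
  rw [zeta_smul_self hb, zeta_smul_self hb, angle_smul_left_of_pos _ _ (scale_pos hs),
    angle_smul_right_of_pos _ _ (scale_pos ht)]

lemma angle_smul_self_of_neg (hb : ‖b‖ = 1) {t : ℝ} (ht : t < 0) : angle (t • b) b = π := by
  have hb0 : b ≠ 0 := norm_ne_zero_iff.mp (by rw [hb]; exact one_ne_zero)
  rw [angle_smul_left_of_neg _ _ ht, angle_neg_self_of_nonzero hb0]

end AxisVectors

lemma hpar_pos {g : ℝ} (hg1 : -2 < g) (hg2 : g < 2) : 0 < hpar g :=
  Real.sqrt_pos.mpr (by nlinarith)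

lemma hpar_lt_one {g : ℝ} (hg0 : g ≠ 0) : hpar g < 1 := by
  rw [hpar, Real.sqrt_lt' one_pos]
  nlinarith [sq_pos_of_ne_zero hg0]

theorem stmt9_general (N : ℕ) (g : ℝ) (hg1 : -2 < g) (hg2 : g < 2)
    (b : EuclideanSpace ℝ (Fin N)) (hb : ‖b‖ = 1) :
    1 / hpar g *
        Real.arccos ((inner ℝ (zeta g b (-Real.exp (g * Real.pi / 2) • b)) (zeta g b b) : ℝ) /
          (‖zeta g b (-Real.exp (g * Real.pi / 2) • b)‖ * ‖zeta g b b‖)) =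
      Real.pi / hpar g ∧
    (g ≠ 0 → Real.pi < Real.pi / hpar g) := by
  have hc : -Real.exp (g * π / 2) < 0 := neg_neg_of_pos (Real.exp_pos _)
  have angle_eq_pi : angle (zeta g b (-Real.exp (g * π / 2) • b)) (zeta g b b) = π := by
    have h := angle_zeta_smul_self hb g hc.ne one_ne_zero
    rw [one_smul] at h
    rw [h, angle_smul_self_of_neg hb hc]
  refine ⟨?_, fun hg0 => ?_⟩
  · rw [← angle, angle_eq_pi, one_div_mul_eq_div]
  · simpa using div_lt_div_of_pos_left Real.pi_pos (hpar_pos hg1 hg2) (hpar_lt_one hg0)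

theorem stmt9 (N : ℕ) (hN : 2 ≤ N) (g : ℝ) (hg1 : -2 < g) (hg2 : g < 2)
    (b : EuclideanSpace ℝ (Fin N)) (hb : ‖b‖ = 1) :
    1 / hpar g *
        Real.arccos ((inner ℝ (zeta g b (-Real.exp (g * Real.pi / 2) • b)) (zeta g b b) : ℝ) /
          (‖zeta g b (-Real.exp (g * Real.pi / 2) • b)‖ * ‖zeta g b b‖)) =
      Real.pi / hpar g ∧
    (g ≠ 0 → Real.pi < Real.pi / hpar g) :=
  stmt9_general N g hg1 hg2 b hb
end
end
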